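/- Let H₀ be a complex Hilbert space, let q and c be real numbers with 0 < q < 1 and c ≥ 0, let ε ∈ {+1, −1}, and assume c > 0 if ε = −1. Set λ_ε := 1/2 + ε(c + 1/4)^{1/2} and c_ε(n) := (c + λ_ε q^{2n} − (λ_ε q^{2n})²)^{1/2} for n ∈ ℕ. Then there exist bounded operators A and B on ℓ²(ℕ, H₀), with A self-adjoint, such that for all n ∈ ℕ and η ∈ H₀: A(eₙ(η)) = λ_ε q^{2n} eₙ(η), B(e₀(η)) = 0, B(eₙ(η)) = c_ε(n) eₙ₋₁(η) for n ≥ 1, and B*(eₙ(η)) = c_ε(n+1) eₙ₊₁(η); and these operators satisfy the Podles' sphere relations AB = q^{−2}BA, AB* = q²B*A, B*B = A − A² + c·1, and BB* = q²A − q⁴A² + c·1. -/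

import Mathlib

/-!
On `ℓ²(ℕ, H₀)` take `A` diagonal with entries `aₙ = λ q^{2n}` and `B = S* D_b`, the backward
shift after the diagonal operator with entries `bₙ = c_ε(n)`; then `B* = D_b S` is the weighted
forward shift. Since `λ = λ_ε` is a root of `λ² = λ + c`, one has
`c + λt - (λt)² = (1 - t)(c + λ²t) ∈ [0, c + λ²]` for `t = q^{2n} ∈ [0, 1]`, so both weight
sequences are bounded, `bₙ² = c + aₙ - aₙ²` and `b₀ = 0`. Together with `aₙ₊₁ = q² aₙ` these
are exactly the four relations, read off coordinatewise.
-/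

open ContinuousLinearMap

open scoped ENNReal

theorem Memℓp.comp_injective {α β : Type*} {E : α → Type*} [∀ i, NormedAddCommGroup (E i)]
    {p : ℝ≥0∞} {f : ∀ i, E i} (hf : Memℓp f p) {e : β → α} (he : Function.Injective e) :
    Memℓp (fun j => f (e j)) p := by
  obtain rfl | rfl | hp := p.trichotomy
  · exact memℓp_zero (hf.finite_dsupport.preimage he.injOn)
  · exact memℓp_infty (hf.bddAbove.mono (Set.range_comp_subset_range e fun i => ‖f i‖))
  · exact memℓp_gen ((hf.summable hp).comp_injective he)

noncomputable section

namespace lp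

section

variable {𝕜 α : Type*} {E : α → Type*} [RCLike 𝕜] [∀ i, NormedAddCommGroup (E i)]
  [∀ i, NormedSpace 𝕜 (E i)] {p : ℝ≥0∞}

theorem norm_smul_apply_le (w : lp (fun _ : α => 𝕜) ∞) (f : lp E p) (i : α) :
    ‖w i • f i‖ ≤ ‖((‖w‖ : ℝ) : 𝕜) • f i‖ := by
  rw [norm_smul, norm_smul, RCLike.norm_ofReal, abs_norm]
  gcongr
  exact norm_apply_le_norm ENNReal.top_ne_zero w i

variable [Fact (1 ≤ p)]

theorem norm_comp_injective_le {β : Type*} {e : β → α} (he : Function.Injective e) (f : lp E p) :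
    ‖(⟨fun j => f (e j), (lp.memℓp f).comp_injective he⟩ : lp (fun j => E (e j)) p)‖ ≤ ‖f‖ := by
  obtain hp0 | rfl | hp := p.trichotomy
  · exact absurd hp0 (one_pos.trans_le Fact.out).ne'
  · exact norm_le_of_forall_le (norm_nonneg f) fun j =>
      norm_apply_le_norm ENNReal.top_ne_zero f (e j)
  · refine norm_le_of_forall_sum_le hp (norm_nonneg f) fun s => ?_
    simpa [Finset.sum_map] using sum_rpow_le_norm_rpow hp f (s.map ⟨e, he⟩)

def diagMul (w : lp (fun _ : α => 𝕜) ∞) : lp E p →L[𝕜] lp E p :=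
  LinearMap.mkContinuous
    { toFun f := ⟨fun i => w i • f i,
        (lp.memℓp (((‖w‖ : ℝ) : 𝕜) • f)).mono' (norm_smul_apply_le w f)⟩
      map_add' f g := lp.ext <| funext fun i => smul_add _ _ _
      map_smul' c f := lp.ext <| funext fun i => smul_comm _ _ _ }
    ‖w‖ fun f => calc
      _ ≤ ‖((‖w‖ : ℝ) : 𝕜) • f‖ :=
        norm_mono (one_pos.trans_le Fact.out).ne' (norm_smul_apply_le w f)
      _ = ‖w‖ * ‖f‖ := by
        rw [norm_const_smul (one_pos.trans_le Fact.out).ne', RCLike.norm_ofReal, abs_norm]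

@[simp] theorem diagMul_apply (w : lp (fun _ : α => 𝕜) ∞) (f : lp E p) (i : α) :
    diagMul w f i = w i • f i := rfl

theorem diagMul_single [DecidableEq α] (w : lp (fun _ : α => 𝕜) ∞) (i : α) (x : E i) :
    diagMul w (lp.single p i x) = w i • lp.single p i x := by
  ext j
  by_cases h : j = i
  · subst h; simp
  · simp [h]

end

section Shift

variable {𝕜 E : Type*} [RCLike 𝕜] [NormedAddCommGroup E] [NormedSpace 𝕜 E] {p : ℝ≥0∞}
  [Fact (1 ≤ p)]

variable (𝕜 E p) in
def shiftLeft : lp (fun _ : ℕ => E) p →L[𝕜] lp (fun _ : ℕ => E) p :=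
  LinearMap.mkContinuous
    { toFun f := ⟨fun n => f (n + 1), (lp.memℓp f).comp_injective (add_left_injective 1)⟩
      map_add' _ _ := rfl
      map_smul' _ _ := rfl }
    1 fun f => (one_mul ‖f‖).symm ▸ norm_comp_injective_le (add_left_injective 1) f

@[simp] theorem shiftLeft_apply (f : lp (fun _ : ℕ => E) p) (n : ℕ) :
    shiftLeft 𝕜 E p f n = f (n + 1) := rfl

theorem shiftLeft_single_zero (x : E) : shiftLeft 𝕜 E p (lp.single p 0 x) = 0 :=
  lp.ext <| funext fun n => lp.single_apply_ne p 0 x n.succ_ne_zero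

theorem shiftLeft_single_succ (n : ℕ) (x : E) :
    shiftLeft 𝕜 E p (lp.single p (n + 1) x) = lp.single p n x := by
  ext m
  simp [lp.single_apply, Pi.single_apply]

theorem shiftLeft_comp_diagMul_single_zero (b : lp (fun _ : ℕ => 𝕜) ∞) (x : E) :
    (shiftLeft 𝕜 E p ∘L diagMul b) (lp.single p 0 x) = 0 := by
  rw [comp_apply, diagMul_single, map_smul, shiftLeft_single_zero, smul_zero]

theorem shiftLeft_comp_diagMul_single_succ (b : lp (fun _ : ℕ => 𝕜) ∞) (n : ℕ) (x : E) :
    (shiftLeft 𝕜 E p ∘L diagMul b) (lp.single p (n + 1) x) = b (n + 1) • lp.single p n x := by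
  rw [comp_apply, diagMul_single, map_smul, shiftLeft_single_succ]

theorem diagMul_comp_shiftLeft_comp_diagMul {a b : lp (fun _ : ℕ => 𝕜) ∞} {q : 𝕜} (hq : q ≠ 0)
    (ha : ∀ n, a (n + 1) = q ^ 2 * a n) :
    diagMul a ∘L (shiftLeft 𝕜 E p ∘L diagMul b) =
      (q ^ 2)⁻¹ • ((shiftLeft 𝕜 E p ∘L diagMul b) ∘L diagMul a) := by
  ext f n
  simp only [comp_apply, smul_apply, lp.coeFn_smul, Pi.smul_apply, diagMul_apply,
    shiftLeft_apply, smul_smul, ha]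
  congr 1
  field_simp

end Shift

section Adjoint

variable {𝕜 : Type*} [RCLike 𝕜]

theorem isSelfAdjoint_diagMul {α : Type*} {E : α → Type*} [∀ i, NormedAddCommGroup (E i)]
    [∀ i, InnerProductSpace 𝕜 (E i)] [∀ i, CompleteSpace (E i)] {w : lp (fun _ : α => 𝕜) ∞}
    (hw : IsSelfAdjoint w) : IsSelfAdjoint (diagMul w : lp E 2 →L[𝕜] lp E 2) := by
  refine ((eq_adjoint_iff _ _).2 fun f g => ?_).symm
  simp only [inner_eq_tsum, diagMul_apply, inner_smul_left, inner_smul_right]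
  refine tsum_congr fun i => ?_
  rw [starRingEnd_apply, ← lp.star_apply, hw.star_eq]

variable {E : Type*} [NormedAddCommGroup E] [InnerProductSpace 𝕜 E] [CompleteSpace E]

@[simp] theorem adjoint_shiftLeft_apply_zero (f : lp (fun _ : ℕ => E) 2) :
    adjoint (shiftLeft 𝕜 E 2) f 0 = 0 :=
  ext_inner_left 𝕜 fun x => calc
    inner 𝕜 x (adjoint (shiftLeft 𝕜 E 2) f 0)
      = inner 𝕜 (shiftLeft 𝕜 E 2 (lp.single 2 0 x)) f := by
        rw [← adjoint_inner_right, inner_single_left]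
    _ = inner 𝕜 x 0 := by rw [shiftLeft_single_zero, inner_zero_left, inner_zero_right]

@[simp] theorem adjoint_shiftLeft_apply_succ (f : lp (fun _ : ℕ => E) 2) (n : ℕ) :
    adjoint (shiftLeft 𝕜 E 2) f (n + 1) = f n :=
  ext_inner_left 𝕜 fun x => calc
    inner 𝕜 x (adjoint (shiftLeft 𝕜 E 2) f (n + 1))
      = inner 𝕜 (shiftLeft 𝕜 E 2 (lp.single 2 (n + 1) x)) f := by
        rw [← adjoint_inner_right, inner_single_left]
    _ = inner 𝕜 x (f n) := by rw [shiftLeft_single_succ, inner_single_left]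

theorem adjoint_shiftLeft_single (n : ℕ) (x : E) :
    adjoint (shiftLeft 𝕜 E 2) (lp.single 2 n x) = lp.single 2 (n + 1) x := by
  ext (_ | m)
  · simp [lp.single_apply]
  · simp [lp.single_apply, Pi.single_apply]

variable {a b : lp (fun _ : ℕ => 𝕜) ∞} {q c : 𝕜}

theorem adjoint_shiftLeft_comp_diagMul (hb : IsSelfAdjoint b) :
    adjoint (shiftLeft 𝕜 E 2 ∘L diagMul b) = diagMul b ∘L adjoint (shiftLeft 𝕜 E 2) := by
  rw [adjoint_comp, (isSelfAdjoint_diagMul hb).adjoint_eq]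

theorem adjoint_shiftLeft_comp_diagMul_single (hb : IsSelfAdjoint b) (n : ℕ) (x : E) :
    adjoint (shiftLeft 𝕜 E 2 ∘L diagMul b) (lp.single 2 n x) =
      b (n + 1) • lp.single 2 (n + 1) x := by
  rw [adjoint_shiftLeft_comp_diagMul hb, comp_apply, adjoint_shiftLeft_single, diagMul_single]

theorem diagMul_comp_adjoint_shiftLeft_comp_diagMul (hb : IsSelfAdjoint b)
    (ha : ∀ n, a (n + 1) = q ^ 2 * a n) :
    diagMul a ∘L adjoint (shiftLeft 𝕜 E 2 ∘L diagMul b) =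
      q ^ 2 • (adjoint (shiftLeft 𝕜 E 2 ∘L diagMul b) ∘L diagMul a) := by
  rw [adjoint_shiftLeft_comp_diagMul hb]
  ext f (_ | n) <;>
    simp only [comp_apply, smul_apply, lp.coeFn_smul, Pi.smul_apply, diagMul_apply,
      adjoint_shiftLeft_apply_zero, adjoint_shiftLeft_apply_succ, smul_zero, smul_smul, ha]
  congr 1
  ring

theorem adjoint_shiftLeft_comp_diagMul_comp_self (hb : IsSelfAdjoint b) (hb0 : b 0 = 0)
    (hb_sq : ∀ n, b n * b n = a n - a n * a n + c) :
    adjoint (shiftLeft 𝕜 E 2 ∘L diagMul b) ∘L (shiftLeft 𝕜 E 2 ∘L diagMul b) =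
      diagMul a - diagMul a ∘L diagMul a + c • 1 := by
  rw [adjoint_shiftLeft_comp_diagMul hb]
  ext f (_ | n) <;>
    simp only [comp_apply, add_apply, sub_apply, smul_apply, one_apply_eq_self, lp.coeFn_add,
      lp.coeFn_sub, lp.coeFn_smul, Pi.add_apply, Pi.sub_apply, Pi.smul_apply, diagMul_apply,
      shiftLeft_apply, adjoint_shiftLeft_apply_zero, adjoint_shiftLeft_apply_succ, smul_smul,
      ← sub_smul, ← add_smul, ← hb_sq]
  simp [hb0]

theorem shiftLeft_comp_diagMul_comp_adjoint (hb : IsSelfAdjoint b)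
    (ha : ∀ n, a (n + 1) = q ^ 2 * a n) (hb_sq : ∀ n, b n * b n = a n - a n * a n + c) :
    (shiftLeft 𝕜 E 2 ∘L diagMul b) ∘L adjoint (shiftLeft 𝕜 E 2 ∘L diagMul b) =
      q ^ 2 • diagMul a - q ^ 4 • (diagMul a ∘L diagMul a) + c • 1 := by
  rw [adjoint_shiftLeft_comp_diagMul hb]
  ext f n
  simp only [comp_apply, add_apply, sub_apply, smul_apply, one_apply_eq_self, lp.coeFn_add,
    lp.coeFn_sub, lp.coeFn_smul, Pi.add_apply, Pi.sub_apply, Pi.smul_apply, diagMul_apply,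
    shiftLeft_apply, adjoint_shiftLeft_apply_succ, smul_smul, ← sub_smul, ← add_smul, hb_sq, ha]
  congr 1
  ring

end Adjoint

end lp

end

theorem sq_half_add_mul_sqrt {ε c : ℝ} (hε : ε ^ 2 = 1) (hc : -(1 / 4) ≤ c) :
    (1 / 2 + ε * √(c + 1 / 4)) ^ 2 = 1 / 2 + ε * √(c + 1 / 4) + c := by
  have hsqrt := Real.sq_sqrt (show 0 ≤ c + 1 / 4 by linarith)
  linear_combination (c + 1 / 4) * hε + ε ^ 2 * hsqrt

theorem add_mul_sub_sq_mem_Icc {lam c t : ℝ} (hlam : lam ^ 2 = lam + c) (hc : 0 ≤ c)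
    (ht : t ∈ Set.Icc (0 : ℝ) 1) : c + lam * t - (lam * t) ^ 2 ∈ Set.Icc 0 (c + lam ^ 2) := by
  obtain ⟨ht0, ht1⟩ := ht
  rw [show c + lam * t - (lam * t) ^ 2 = (1 - t) * (c + lam ^ 2 * t) by
    linear_combination (-t) * hlam]
  constructor
  · exact mul_nonneg (by linarith) (by positivity)
  · nlinarith [sq_nonneg lam, mul_nonneg ht0 (sq_nonneg lam)]

theorem podles_sphere_representation_general
    {H₀ : Type*} [NormedAddCommGroup H₀] [InnerProductSpace ℂ H₀] [CompleteSpace H₀]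
    (q c ε : ℝ) (hq0 : 0 < q) (hq1 : q < 1) (hc : 0 ≤ c)
    (hε : ε = 1 ∨ ε = -1)
    (lam : ℝ) (hlam : lam = 1 / 2 + ε * Real.sqrt (c + 1 / 4))
    (ce : ℕ → ℝ) (hce : ∀ n : ℕ, ce n = Real.sqrt (c + lam * q ^ (2 * n) - (lam * q ^ (2 * n)) ^ 2)) :
    ∃ A B : lp (fun _ : ℕ => H₀) 2 →L[ℂ] lp (fun _ : ℕ => H₀) 2,
      IsSelfAdjoint A ∧
      (∀ (n : ℕ) (η : H₀),
        A (lp.single 2 n η) = ((lam * q ^ (2 * n) : ℝ) : ℂ) • lp.single 2 n η) ∧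
      (∀ η : H₀, B (lp.single 2 0 η) = 0) ∧
      (∀ (n : ℕ) (η : H₀), 1 ≤ n →
        B (lp.single 2 n η) = ((ce n : ℝ) : ℂ) • lp.single 2 (n - 1) η) ∧
      (∀ (n : ℕ) (η : H₀),
        adjoint B (lp.single 2 n η) = ((ce (n + 1) : ℝ) : ℂ) • lp.single 2 (n + 1) η) ∧
      A ∘L B = (((q : ℂ) ^ 2)⁻¹) • (B ∘L A) ∧
      A ∘L adjoint B = ((q : ℂ) ^ 2) • (adjoint B ∘L A) ∧
      adjoint B ∘L B = A - A ∘L A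
        + (c : ℂ) • (1 : lp (fun _ : ℕ => H₀) 2 →L[ℂ] lp (fun _ : ℕ => H₀) 2) ∧
      B ∘L adjoint B = ((q : ℂ) ^ 2) • A - ((q : ℂ) ^ 4) • (A ∘L A)
        + (c : ℂ) • (1 : lp (fun _ : ℕ => H₀) 2 →L[ℂ] lp (fun _ : ℕ => H₀) 2) := by
  have hlam_sq : lam ^ 2 = lam + c :=
    hlam ▸ sq_half_add_mul_sqrt (by rcases hε with rfl | rfl <;> norm_num) (by linarith)
  have hrad (n : ℕ) := add_mul_sub_sq_mem_Icc (t := q ^ (2 * n)) hlam_sq hc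
    ⟨by positivity, pow_le_one₀ hq0.le hq1.le⟩
  have ha_le (n : ℕ) : ‖((lam * q ^ (2 * n) : ℝ) : ℂ)‖ ≤ |lam| := by
    simpa [abs_of_pos hq0] using
      mul_le_of_le_one_right (abs_nonneg lam) (pow_le_one₀ (n := 2 * n) hq0.le hq1.le)
  have hb_le (n : ℕ) : ‖((ce n : ℝ) : ℂ)‖ ≤ √(c + lam ^ 2) := by
    simpa [hce, abs_of_nonneg (Real.sqrt_nonneg _)] using Real.sqrt_le_sqrt (hrad n).2
  let a : lp (fun _ : ℕ => ℂ) ∞ := ⟨_, memℓp_infty ⟨_, Set.forall_mem_range.2 ha_le⟩⟩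
  let b : lp (fun _ : ℕ => ℂ) ∞ := ⟨_, memℓp_infty ⟨_, Set.forall_mem_range.2 hb_le⟩⟩
  have ha : IsSelfAdjoint a := lp.ext <| funext fun n => Complex.conj_ofReal _
  have hb : IsSelfAdjoint b := lp.ext <| funext fun n => Complex.conj_ofReal _
  have ha_succ (n : ℕ) : a (n + 1) = (q : ℂ) ^ 2 * a n := by
    simp only [a]; push_cast; ring
  have hb_sq (n : ℕ) : b n * b n = a n - a n * a n + c := by
    simp only [a, b]
    rw [hce n, ← Complex.ofReal_mul, Real.mul_self_sqrt (hrad n).1]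
    push_cast
    ring
  have hb_zero : b 0 = 0 := by
    simp only [b, hce, mul_zero, pow_zero, mul_one, Complex.ofReal_eq_zero]
    rw [hlam_sq, add_comm c, sub_self, Real.sqrt_zero]
  refine ⟨lp.diagMul a, lp.shiftLeft ℂ H₀ 2 ∘L lp.diagMul b,
    lp.isSelfAdjoint_diagMul ha,
    fun n η => lp.diagMul_single (E := fun _ => H₀) a n η,
    lp.shiftLeft_comp_diagMul_single_zero b, fun n η hn => ?_,
    lp.adjoint_shiftLeft_comp_diagMul_single hb,
    lp.diagMul_comp_shiftLeft_comp_diagMul (by exact_mod_cast hq0.ne') ha_succ,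
    lp.diagMul_comp_adjoint_shiftLeft_comp_diagMul hb ha_succ,
    lp.adjoint_shiftLeft_comp_diagMul_comp_self hb hb_zero hb_sq,
    lp.shiftLeft_comp_diagMul_comp_adjoint hb ha_succ hb_sq⟩
  obtain ⟨m, rfl⟩ := Nat.exists_eq_add_of_le' hn
  exact lp.shiftLeft_comp_diagMul_single_succ b m η

/-- Podles' sphere representations: let `0 < q < 1`, `c ≥ 0`, `ε = ±1` (with `c > 0` if
`ε = −1`), `λ_ε = 1/2 + ε (c + 1/4)^{1/2}` and
`c_ε(n) = (c + λ_ε q^{2n} − (λ_ε q^{2n})²)^{1/2}`.  Then there are bounded operators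
`A, B` on `ℓ²(ℕ, H₀)`, `A` self-adjoint, with `A (eₙ η) = λ_ε q^{2n} eₙ η`,
`B (e₀ η) = 0`, `B (eₙ η) = c_ε(n) eₙ₋₁ η`, `B* (eₙ η) = c_ε(n+1) eₙ₊₁ η`, satisfying
`A B = q⁻² B A`, `A B* = q² B* A`, `B*B = A − A² + c·1`, `B B* = q² A − q⁴ A² + c·1`. -/
theorem podles_sphere_representation
    {H₀ : Type*} [NormedAddCommGroup H₀] [InnerProductSpace ℂ H₀] [CompleteSpace H₀]
    (q c ε : ℝ) (hq0 : 0 < q) (hq1 : q < 1) (hc : 0 ≤ c)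
    (hε : ε = 1 ∨ ε = -1) (hεc : ε = -1 → 0 < c)
    (lam : ℝ) (hlam : lam = 1 / 2 + ε * Real.sqrt (c + 1 / 4))
    (ce : ℕ → ℝ) (hce : ∀ n : ℕ, ce n = Real.sqrt (c + lam * q ^ (2 * n) - (lam * q ^ (2 * n)) ^ 2)) :
    ∃ A B : lp (fun _ : ℕ => H₀) 2 →L[ℂ] lp (fun _ : ℕ => H₀) 2,
      IsSelfAdjoint A ∧
      (∀ (n : ℕ) (η : H₀),
        A (lp.single 2 n η) = ((lam * q ^ (2 * n) : ℝ) : ℂ) • lp.single 2 n η) ∧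
      (∀ η : H₀, B (lp.single 2 0 η) = 0) ∧
      (∀ (n : ℕ) (η : H₀), 1 ≤ n →
        B (lp.single 2 n η) = ((ce n : ℝ) : ℂ) • lp.single 2 (n - 1) η) ∧
      (∀ (n : ℕ) (η : H₀),
        adjoint B (lp.single 2 n η) = ((ce (n + 1) : ℝ) : ℂ) • lp.single 2 (n + 1) η) ∧
      A ∘L B = (((q : ℂ) ^ 2)⁻¹) • (B ∘L A) ∧
      A ∘L adjoint B = ((q : ℂ) ^ 2) • (adjoint B ∘L A) ∧
      adjoint B ∘L B = A - A ∘L A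
        + (c : ℂ) • (1 : lp (fun _ : ℕ => H₀) 2 →L[ℂ] lp (fun _ : ℕ => H₀) 2) ∧
      B ∘L adjoint B = ((q : ℂ) ^ 2) • A - ((q : ℂ) ^ 4) • (A ∘L A)
        + (c : ℂ) • (1 : lp (fun _ : ℕ => H₀) 2 →L[ℂ] lp (fun _ : ℕ => H₀) 2) :=
  podles_sphere_representation_general q c ε hq0 hq1 hc hε lam hlam ce hce
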